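/- arXiv:1401.7123 — 2 statements merged into one kernel-verified Lean document; each statement's English description precedes it below -/
import Mathlib

section
/- For all natural numbers n, k, and d with k ≥ 1 and n ≥ k, the number of partitions of n into exactly k parts in which any two distinct parts differ by at least d equals the number of partitions of n - 1 into exactly k - 1 parts with pairwise differences at least d and smallest part at least d + 1, plus the number of partitions of n - k into exactly k parts with pairwise differences at least d: p^{(d)}_k(n) = p^{(d)}_{k-1}(n-1, d+1) + p^{(d)}_k(n-k). -/
/-- A multiset of naturals is `d`-distant if any two parts occupying different
positions (i.e. counting multiplicity) differ by at least `d`.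
For `d = 1` this says all parts are distinct; for `d = 0` it is no constraint. -/
def Multiset.DDistant (d : ℕ) (s : Multiset ℕ) : Prop :=
  ∀ a ∈ s, ∀ b ∈ s.erase a, d ≤ max a b - min a b

/-- `p^{(d)}_k(n)`: the number of partitions of `n` into exactly `k` parts
with pairwise differences at least `d`. -/
noncomputable def distantPartitions (d k n : ℕ) : ℕ :=
  Nat.card {p : n.Partition // p.parts.card = k ∧ Multiset.DDistant d p.parts}

/-- `p^{(d)}_k(n, r)`: the number of partitions of `n` into exactly `k` parts
with pairwise differences at least `d` and every part at least `r`. -/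
noncomputable def distantPartitionsMin (d k n r : ℕ) : ℕ :=
  Nat.card {p : n.Partition //
    p.parts.card = k ∧ Multiset.DDistant d p.parts ∧ ∀ a ∈ p.parts, r ≤ a}

/-!
Split the partitions of `n` by whether `1` is a part. Removing a part `1` leaves a `d`-distant
partition of `n - 1` into `k - 1` parts, each at least `d + 1` since it differs from `1` by at
least `d`. If `1` is not a part, subtracting `1` from every part gives a `d`-distant partition of
`n - k` into `k` parts, because differences of parts are invariant under translation.
-/

theorem Nat.card_subtype_eq_card_and_add_card_not_and {α : Type*} [Finite α]
    (p q : α → Prop) :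
    Nat.card {x // p x} = Nat.card {x // q x ∧ p x} + Nat.card {x // ¬q x ∧ p x} := by
  classical
  rw [← Nat.card_sum]
  refine Nat.card_congr <| (Equiv.sumCompl fun x : {x // p x} => q x).symm.trans <|
    Equiv.sumCongr
      ((Equiv.subtypeSubtypeEquivSubtypeInter p q).trans
        (Equiv.subtypeEquivRight fun _ => and_comm))
      ((Equiv.subtypeSubtypeEquivSubtypeInter p fun x => ¬q x).trans
        (Equiv.subtypeEquivRight fun _ => and_comm))

namespace Multiset

theorem dDistant_cons {d a : ℕ} {s : Multiset ℕ} :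
    DDistant d (a ::ₘ s) ↔ DDistant d s ∧ ∀ b ∈ s, d ≤ max a b - min a b := by
  refine ⟨fun h => ⟨fun x hx y hy => ?_, by simpa using h a (mem_cons_self a s)⟩, ?_⟩
  · exact h x (mem_cons_of_mem hx) y (mem_of_le (erase_le_erase x (le_cons_self s a)) hy)
  · rintro ⟨hs, ha⟩ x hx y hy
    by_cases hxa : x = a
    · subst hxa
      exact ha y (by simpa using hy)
    rw [erase_cons_tail s (Ne.symm hxa)] at hy
    have hxs : x ∈ s := (mem_cons.1 hx).resolve_left hxa
    rcases mem_cons.1 hy with rfl | hy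
    · have := ha x hxs
      omega
    · exact hs x hxs y hy

theorem dDistant_cons_of_forall_le {d a : ℕ} {s : Multiset ℕ} (ha : ∀ b ∈ s, a ≤ b) :
    DDistant d (a ::ₘ s) ↔ DDistant d s ∧ ∀ b ∈ s, a + d ≤ b := by
  rw [dDistant_cons]
  refine and_congr_right fun _ => forall₂_congr fun b hb => ?_
  have := ha b hb
  omega

theorem dDistant_map_add {d c : ℕ} {s : Multiset ℕ} :
    DDistant d (s.map (· + c)) ↔ DDistant d s := by
  simp only [DDistant, forall_mem_map_iff, ← map_erase _ (add_left_injective c)]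
  exact forall₂_congr fun a _ => forall₂_congr fun b _ => by omega

theorem sum_map_add_one (s : Multiset ℕ) : (s.map (· + 1)).sum = s.sum + card s := by
  simp [sum_map_add]

end Multiset

namespace Nat.Partition

theorem map_add_one_map_sub_one {n : ℕ} (p : n.Partition) :
    (p.parts.map (· - 1)).map (· + 1) = p.parts := by
  rw [Multiset.map_map]
  conv_rhs => rw [← Multiset.map_id p.parts]
  exact Multiset.map_congr rfl fun a ha => Nat.sub_add_cancel (p.parts_pos ha)

theorem card_subtype_one_mem_and {n : ℕ} (hn : 1 ≤ n) (P : Multiset ℕ → Prop) :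
    Nat.card {p : n.Partition // 1 ∈ p.parts ∧ P p.parts} =
      Nat.card {q : (n - 1).Partition // P (1 ::ₘ q.parts)} :=
  Nat.card_congr <| (Equiv.subtypeSubtypeEquivSubtypeInter _ _).symm.trans <|
    ((partitionWithPartEquiv le_rfl hn).symm.subtypeEquiv fun q => by simp).symm

theorem card_subtype_one_notMem_and {m k n : ℕ} (h : m + k = n) (P : Multiset ℕ → Prop) :
    Nat.card {p : n.Partition // 1 ∉ p.parts ∧ p.parts.card = k ∧ P p.parts} =
      Nat.card {q : m.Partition // q.parts.card = k ∧ P (q.parts.map (· + 1))} := by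
  refine Nat.card_congr
    { toFun p := ⟨⟨p.1.parts.map (· - 1), ?_, ?_⟩, ?_⟩
      invFun q := ⟨⟨q.1.parts.map (· + 1), ?_, ?_⟩, ?_⟩
      left_inv p := Subtype.ext <| Nat.Partition.ext <| map_add_one_map_sub_one _
      right_inv q := Subtype.ext <| Nat.Partition.ext <| by simp [Multiset.map_map] }
  · intro i hi
    obtain ⟨a, ha, rfl⟩ := Multiset.mem_map.1 hi
    have := p.1.parts_pos ha
    have : a ≠ 1 := fun ha1 => p.2.1 (ha1 ▸ ha)
    omega
  · have := Multiset.sum_map_add_one (p.1.parts.map (· - 1))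
    rw [map_add_one_map_sub_one, p.1.parts_sum, Multiset.card_map, p.2.2.1] at this
    omega
  · exact ⟨by rw [Multiset.card_map, p.2.2.1], by rw [map_add_one_map_sub_one]; exact p.2.2.2⟩
  · intro i hi
    obtain ⟨a, -, rfl⟩ := Multiset.mem_map.1 hi
    omega
  · rw [Multiset.sum_map_add_one, q.1.parts_sum, q.2.1, h]
  · refine ⟨fun h1 => ?_, by rw [Multiset.card_map, q.2.1], q.2.2⟩
    obtain ⟨a, ha, ha1⟩ := Multiset.mem_map.1 h1
    have := q.1.parts_pos ha
    omega

end Nat.Partition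

/-- `p^{(d)}_k(n) = p^{(d)}_{k-1}(n-1, d+1) + p^{(d)}_k(n-k)`. -/
theorem stmt_6 (n k d : ℕ) (hk : 1 ≤ k) (hn : k ≤ n) :
    distantPartitions d k n =
      distantPartitionsMin d (k - 1) (n - 1) (d + 1) + distantPartitions d k (n - k) := by
  rw [distantPartitions, Nat.card_subtype_eq_card_and_add_card_not_and _ (1 ∈ ·.parts),
    Nat.Partition.card_subtype_one_mem_and (hk.trans hn) fun s => s.card = k ∧ s.DDistant d,
    Nat.Partition.card_subtype_one_notMem_and (Nat.sub_add_cancel hn) (Multiset.DDistant d)]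
  simp only [Multiset.dDistant_map_add]
  congr 1
  refine Nat.card_congr (Equiv.subtypeEquivRight fun q => ?_)
  rw [Multiset.card_cons, Multiset.dDistant_cons_of_forall_le fun b hb => q.parts_pos hb,
    add_comm 1 d]
  exact and_congr_left' (by omega)
end

section
/- For all natural numbers n, k, and d with k ≥ 1, the number of partitions of n into exactly k parts in which any two distinct parts differ by at least d equals the sum over all integers q ≥ 0 with q·k + 1 ≤ n of the number of partitions of n - q·k - 1 into exactly k - 1 parts with pairwise differences at least d and smallest part at least d + 1: p^{(d)}_k(n) = Σ_{q ≥ 0} p^{(d)}_{k-1}(n - q·k - 1, d+1). (The sum has only finitely many nonzero terms.) -/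
namespace Multiset

theorem dDistant_cons_iff {d a : ℕ} {s : Multiset ℕ} :
    (a ::ₘ s).DDistant d ↔ s.DDistant d ∧ ∀ b ∈ s, d ≤ max a b - min a b := by
  constructor
  · intro h
    refine ⟨fun x hx y hy => h x (mem_cons_of_mem hx) y ?_,
      fun b hb => h a (mem_cons_self a s) b (by rwa [erase_cons_head])⟩
    exact mem_of_le (erase_le_erase x (le_cons_self s a)) hy
  · rintro ⟨hs, ha⟩ x hx y hy
    by_cases hxa : x = a
    · subst hxa
      rw [erase_cons_head] at hy
      exact ha y hy
    · rw [erase_cons_tail s (Ne.symm hxa)] at hy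
      have hxs : x ∈ s := (mem_cons.1 hx).resolve_left hxa
      rcases mem_cons.1 hy with rfl | hy
      · have := ha x hxs
        omega
      · exact hs x hxs y hy

theorem dDistant_map_add_iff {d q : ℕ} {s : Multiset ℕ} :
    (s.map (· + q)).DDistant d ↔ s.DDistant d := by
  induction s using Multiset.induction_on with
  | empty => simp [DDistant]
  | cons a s ih =>
    simp only [map_cons, dDistant_cons_iff, ih, forall_mem_map_iff]
    exact and_congr_right fun _ => forall₂_congr fun b _ => by omega

end Multiset

open Multiset

/-- Undoes removing the smallest part `q + 1` and lowering every other part by `q`. -/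
def consShift (q : ℕ) (t : Multiset ℕ) : Multiset ℕ :=
  (q + 1) ::ₘ t.map (· + q)

section ConsShift

variable {d q : ℕ} {t : Multiset ℕ}

theorem card_consShift : (consShift q t).card = t.card + 1 := by
  simp [consShift]

theorem sum_consShift : (consShift q t).sum = t.sum + q * (t.card + 1) + 1 := by
  simp only [consShift, sum_cons, sum_map_add, map_id', map_const', sum_replicate, smul_eq_mul]
  ring

theorem succ_le_of_mem_consShift (ht : ∀ b ∈ t, 0 < b) {a : ℕ} (ha : a ∈ consShift q t) :
    q + 1 ≤ a := by
  rcases mem_cons.1 ha with rfl | ha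
  · exact le_rfl
  · obtain ⟨b, hb, rfl⟩ := mem_map.1 ha
    have := ht b hb
    omega

theorem consShift_inj {q' : ℕ} {t' : Multiset ℕ} (ht : ∀ b ∈ t, 0 < b)
    (ht' : ∀ b ∈ t', 0 < b) : consShift q t = consShift q' t' ↔ q = q' ∧ t = t' := by
  refine ⟨fun h => ?_, by rintro ⟨rfl, rfl⟩; rfl⟩
  have hq : q = q' := by
    have h₁ : q + 1 ∈ consShift q' t' := h ▸ mem_cons_self _ _
    have h₂ : q' + 1 ∈ consShift q t := h ▸ mem_cons_self _ _
    have := succ_le_of_mem_consShift ht' h₁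
    have := succ_le_of_mem_consShift ht h₂
    omega
  subst hq
  exact ⟨rfl, map_injective (add_left_injective q) (cons_inj_right _ |>.1 h)⟩

theorem dDistant_consShift (ht : t.DDistant d) (hmin : ∀ b ∈ t, d + 1 ≤ b) :
    (consShift q t).DDistant d := by
  refine dDistant_cons_iff.2 ⟨dDistant_map_add_iff.2 ht, forall_mem_map_iff.2 fun b hb => ?_⟩
  have := hmin b hb
  omega

theorem exists_consShift_eq {s : Multiset ℕ} (hs : s ≠ 0) (hpos : ∀ a ∈ s, 0 < a)
    (hd : s.DDistant d) :
    ∃ q t, consShift q t = s ∧ t.DDistant d ∧ ∀ b ∈ t, d + 1 ≤ b := by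
  obtain ⟨m, hm, hmin⟩ := exists_min_image id hs
  have hm₀ := hpos m hm
  rw [← cons_erase hm, dDistant_cons_iff] at hd
  have hgap : ∀ b ∈ s.erase m, m + d ≤ b := fun b hb => by
    have := hd.2 b hb
    have := hmin b (mem_of_mem_erase hb)
    simp only [id] at this
    omega
  have hshift : ((s.erase m).map (· - (m - 1))).map (· + (m - 1)) = s.erase m := by
    rw [map_map]
    conv_rhs => rw [← map_id (s.erase m)]
    exact map_congr rfl fun b hb => by have := hgap b hb; simp only [Function.comp, id]; omega
  refine ⟨m - 1, (s.erase m).map (· - (m - 1)), ?_, ?_, ?_⟩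
  · rw [consShift, hshift, Nat.sub_add_cancel hm₀, cons_erase hm]
  · rw [← dDistant_map_add_iff (q := m - 1), hshift]
    exact hd.1
  · simp only [forall_mem_map_iff]
    intro b hb
    have := hgap b hb
    omega

end ConsShift

def distantMultisets (d k n r : ℕ) : Set (Multiset ℕ) :=
  {s | s.sum = n ∧ s.card = k ∧ s.DDistant d ∧ ∀ a ∈ s, r ≤ a}

section DistantMultisets

variable {d k n r : ℕ}

def distantPartitionsMinEquiv (hr : 0 < r) :
    {p : n.Partition // p.parts.card = k ∧ p.parts.DDistant d ∧ ∀ a ∈ p.parts, r ≤ a} ≃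
      distantMultisets d k n r where
  toFun p := ⟨p.1.parts, p.1.parts_sum, p.2⟩
  invFun s := ⟨⟨s.1, fun ha => hr.trans_le (s.2.2.2.2 _ ha), s.2.1⟩, s.2.2⟩
  left_inv _ := rfl
  right_inv _ := rfl

theorem distantPartitionsMin_eq_card (hr : 0 < r) :
    distantPartitionsMin d k n r = Nat.card (distantMultisets d k n r) :=
  Nat.card_congr (distantPartitionsMinEquiv hr)

instance finite_distantMultisets_succ : Finite (distantMultisets d k n (r + 1)) :=
  Finite.of_equiv _ (distantPartitionsMinEquiv r.succ_pos)

theorem consShift_mem_distantMultisets {q : ℕ} {t : Multiset ℕ} (hq : q * (k + 1) + 1 ≤ n)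
    (ht : t ∈ distantMultisets d k (n - q * (k + 1) - 1) (d + 1)) :
    consShift q t ∈ distantMultisets d (k + 1) n 1 := by
  obtain ⟨hsum, hcard, hd, hmin⟩ := ht
  have hpos : ∀ b ∈ t, 0 < b := fun b hb => (hmin b hb).trans_lt' d.succ_pos
  refine ⟨?_, by rw [card_consShift, hcard], dDistant_consShift hd hmin,
    fun a ha => (succ_le_of_mem_consShift hpos ha).trans' q.succ_pos⟩
  rw [sum_consShift, hsum, hcard]
  omega

end DistantMultisets

theorem distantPartitions_eq_distantPartitionsMin_one (d k n : ℕ) :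
    distantPartitions d k n = distantPartitionsMin d k n 1 :=
  Nat.card_congr <| Equiv.subtypeEquivRight fun p =>
    ⟨fun ⟨hk, hd⟩ => ⟨hk, hd, fun _ ha => p.parts_pos ha⟩, fun ⟨hk, hd, _⟩ => ⟨hk, hd⟩⟩

theorem distantPartitionsMin_succ_one (d k n : ℕ) :
    distantPartitionsMin d (k + 1) n 1 =
      ∑ q ∈ (Finset.range n).filter (fun q => q * (k + 1) + 1 ≤ n),
        distantPartitionsMin d k (n - q * (k + 1) - 1) (d + 1) := by
  simp only [distantPartitionsMin_eq_card one_pos, distantPartitionsMin_eq_card d.succ_pos]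
  rw [← Finset.sum_coe_sort, ← Nat.card_sigma]
  have hpos {m : ℕ} {t : Multiset ℕ} (ht : t ∈ distantMultisets d k m (d + 1)) :
      ∀ b ∈ t, 0 < b := fun b hb => (ht.2.2.2 b hb).trans_lt' d.succ_pos
  refine (Nat.card_eq_of_bijective (fun x => ⟨consShift x.1 x.2,
    consShift_mem_distantMultisets (Finset.mem_filter.1 x.1.2).2 x.2.2⟩) ⟨?_, ?_⟩).symm
  · rintro ⟨⟨q, hq⟩, t, ht⟩ ⟨⟨q', hq'⟩, t', ht'⟩ h
    obtain ⟨rfl, rfl⟩ :=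
      consShift_inj (hpos ht) (hpos ht') |>.1 (congrArg Subtype.val h)
    rfl
  · rintro ⟨s, hsum, hcard, hd, hs₁⟩
    have hs : s ≠ 0 := by rintro rfl; simp at hcard
    obtain ⟨q, t, rfl, htd, htmin⟩ := exists_consShift_eq hs hs₁ hd
    rw [card_consShift, Nat.add_right_cancel_iff] at hcard
    rw [sum_consShift, hcard] at hsum
    have hq : q ≤ q * (k + 1) := Nat.le_mul_of_pos_right q k.succ_pos
    exact ⟨⟨⟨q, Finset.mem_filter.2 ⟨Finset.mem_range.2 (by omega), by omega⟩⟩,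
      t, by dsimp only; omega, hcard, htd, htmin⟩, rfl⟩

/-- `p^{(d)}_k(n) = Σ_{q ≥ 0, q·k+1 ≤ n} p^{(d)}_{k-1}(n - q·k - 1, d+1)`. -/
theorem stmt_8 (n k d : ℕ) (hk : 1 ≤ k) :
    distantPartitions d k n =
      ∑ q ∈ (Finset.range n).filter (fun q => q * k + 1 ≤ n),
        distantPartitionsMin d (k - 1) (n - q * k - 1) (d + 1) := by
  obtain ⟨k, rfl⟩ := Nat.exists_eq_add_of_le' hk
  rw [distantPartitions_eq_distantPartitionsMin_one, distantPartitionsMin_succ_one,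
    Nat.add_sub_cancel]
end
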